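/- arXiv:2205.10037 — 3 statements merged into one kernel-verified Lean document; each statement's English description precedes it below -/
import Mathlib

section
/- For the braking function B(v) = v²/(2b) with b > 0, if a vehicle with speed v ≥ 0 and free space f satisfies B(v) ≤ f and f − vΔt < B(v) and v − bΔt ≥ 0, then applying constant deceleration −b for time Δt gives new speed v' = v − bΔt ≥ 0 and displacement δ' = vΔt − bΔt²/2 ≥ 0, and these satisfy δ' + B(v') ≤ f. -/
/-- Braking function B(v) = v²/(2b). -/
noncomputable def brake (b v : ℝ) : ℝ := v ^ 2 / (2 * b)

/- Energy balance `v² = v'² + 2 b δ'`: braking at the rate used by `brake` keeps `δ + B(v)` constant. -/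
theorem decel_dist_add_brake_sub {b : ℝ} (hb : b ≠ 0) (t v : ℝ) :
    (v * t - b * t ^ 2 / 2) + brake b (v - b * t) = brake b v := by
  unfold brake
  field_simp
  ring

theorem decel_dist_nonneg {b t v : ℝ} (hb : 0 ≤ b) (ht : 0 ≤ t) (hv : 0 ≤ v - b * t) :
    0 ≤ v * t - b * t ^ 2 / 2 :=
  calc 0 ≤ t * (v - b * t) + b * t ^ 2 / 2 := by positivity
    _ = v * t - b * t ^ 2 / 2 := by ring

theorem decel_region_safe_general (b Δt v f : ℝ) (hb : 0 < b) (hΔt : 0 < Δt)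
    (hf : brake b v ≤ f)
    (h2 : 0 ≤ v - b * Δt) :
    0 ≤ v - b * Δt ∧ 0 ≤ v * Δt - b * Δt ^ 2 / 2 ∧
      (v * Δt - b * Δt ^ 2 / 2) + brake b (v - b * Δt) ≤ f :=
  ⟨h2, decel_dist_nonneg hb.le hΔt.le h2, (decel_dist_add_brake_sub hb.ne' Δt v).trans_le hf⟩

theorem decel_region_safe (b Δt v f : ℝ) (hb : 0 < b) (hΔt : 0 < Δt)
    (hv : 0 ≤ v) (hf : brake b v ≤ f)
    (h1 : f - v * Δt < brake b v) (h2 : 0 ≤ v - b * Δt) :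
    0 ≤ v - b * Δt ∧ 0 ≤ v * Δt - b * Δt ^ 2 / 2 ∧
      (v * Δt - b * Δt ^ 2 / 2) + brake b (v - b * Δt) ≤ f :=
  decel_region_safe_general b Δt v f hb hΔt hf h2
end

section
/- The region-based speed policy respects the safety contract: for any v ≥ 0 and f ≥ B(v) (with B(v) = v²/(2b), b > 0, a > 0, Δt > 0), the new speed v' and displacement δ' chosen by the policy satisfy v' ≥ 0, δ' ≥ 0, and δ' + B(v') ≤ f. The policy is: if f − vΔt < B(v) and v − bΔt < 0 then (v', δ') = (0, f); if f − vΔt < B(v) and v − bΔt ≥ 0 then (v', δ') = (v − bΔt, vΔt − bΔt²/2); if f − vΔt ≥ B(v) and f − vΔt − aΔt²/2 < B(v + aΔt) then (v', δ') = (v, vΔt); otherwise (v', δ') = (v + aΔt, vΔt + aΔt²/2). -/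
/-- The region-based speed policy: returns (new speed, displacement). -/
noncomputable def speedPolicy (b a Δt v f : ℝ) : ℝ × ℝ :=
  if f - v * Δt < brake b v ∧ v - b * Δt < 0 then (0, f)
  else if f - v * Δt < brake b v ∧ 0 ≤ v - b * Δt then
    (v - b * Δt, v * Δt - b * Δt ^ 2 / 2)
  else if brake b v ≤ f - v * Δt ∧ f - v * Δt - a * Δt ^ 2 / 2 < brake b (v + a * Δt) then
    (v, v * Δt)
  else (v + a * Δt, v * Δt + a * Δt ^ 2 / 2)

/-! Each branch of the policy is safe on its own region: stopping consumes exactly the free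
distance `f`, full braking for `Δt` trades displacement for braking distance one-for-one, and
cruising or accelerating are only chosen when the free distance left afterwards still covers
the braking distance at the new speed. -/

def IsSafeStep (b f : ℝ) (step : ℝ × ℝ) : Prop :=
  0 ≤ step.1 ∧ 0 ≤ step.2 ∧ step.2 + brake b step.1 ≤ f

theorem brake_nonneg {b : ℝ} (hb : 0 ≤ b) (v : ℝ) : 0 ≤ brake b v := by
  unfold brake
  positivity

theorem brake_zero (b : ℝ) : brake b 0 = 0 := by
  simp [brake]

theorem displacement_add_brake_sub {b : ℝ} (hb : b ≠ 0) (v Δt : ℝ) :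
    (v * Δt - b * Δt ^ 2 / 2) + brake b (v - b * Δt) = brake b v := by
  unfold brake
  field_simp
  ring

theorem isSafeStep_stop {b f : ℝ} (hf : 0 ≤ f) : IsSafeStep b f (0, f) :=
  ⟨le_rfl, hf, by simp [brake_zero]⟩

theorem isSafeStep_brake {b Δt v f : ℝ} (hb : 0 < b) (hΔt : 0 ≤ Δt) (hslow : 0 ≤ v - b * Δt)
    (hf : brake b v ≤ f) : IsSafeStep b f (v - b * Δt, v * Δt - b * Δt ^ 2 / 2) := by
  refine ⟨hslow, ?_, ?_⟩
  · have : 0 ≤ Δt * (v - b * Δt / 2) := mul_nonneg hΔt (by linarith [mul_nonneg hb.le hΔt])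
    linarith
  · simpa only [displacement_add_brake_sub hb.ne'] using hf

theorem isSafeStep_cruise {b Δt v f : ℝ} (hv : 0 ≤ v) (hΔt : 0 ≤ Δt)
    (hfar : brake b v ≤ f - v * Δt) : IsSafeStep b f (v, v * Δt) :=
  ⟨hv, mul_nonneg hv hΔt, by simp only; linarith⟩

theorem isSafeStep_accelerate {b a Δt v f : ℝ} (hv : 0 ≤ v) (ha : 0 ≤ a) (hΔt : 0 ≤ Δt)
    (hfar : brake b (v + a * Δt) ≤ f - v * Δt - a * Δt ^ 2 / 2) :
    IsSafeStep b f (v + a * Δt, v * Δt + a * Δt ^ 2 / 2) :=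
  ⟨by positivity, by positivity, by simp only; linarith⟩

theorem speedPolicy_safe (b a Δt v f : ℝ) (hb : 0 < b) (ha : 0 < a) (hΔt : 0 < Δt)
    (hv : 0 ≤ v) (hf : brake b v ≤ f) :
    0 ≤ (speedPolicy b a Δt v f).1 ∧ 0 ≤ (speedPolicy b a Δt v f).2 ∧
      (speedPolicy b a Δt v f).2 + brake b (speedPolicy b a Δt v f).1 ≤ f := by
  change IsSafeStep b f (speedPolicy b a Δt v f)
  unfold speedPolicy
  split_ifs with hstop hbrake hcruise
  · exact isSafeStep_stop ((brake_nonneg hb.le v).trans hf)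
  · exact isSafeStep_brake hb hΔt.le hbrake.2 hf
  · exact isSafeStep_cruise hv hΔt.le hcruise.1
  · have hfar : brake b v ≤ f - v * Δt := by
      by_contra! hnear
      rcases lt_or_ge (v - b * Δt) 0 with hfast | hslow
      exacts [hstop ⟨hnear, hfast⟩, hbrake ⟨hnear, hslow⟩]
    exact isSafeStep_accelerate hv ha.le hΔt.le (not_lt.mp fun hnear => hcruise ⟨hfar, hnear⟩)
end

section
/- The conjunction of the vehicle and Runtime assume-guarantee contracts forms an inductive invariant: consider system states consisting, for each vehicle c in a finite set C, of a speed v_c, a free space f_c, and a traveled distance δ_c. Suppose each vehicle's transition satisfies: if 0 ≤ v_c and B_c(v_c) ≤ f_c then the new values satisfy 0 ≤ v_c', 0 ≤ δ_c', and δ_c' + B_c(v_c') ≤ f_c; and the Runtime's transition satisfies: if 0 ≤ δ_c ≤ f_c for all c and the ahead-spaces Ahead_c(f_c − δ_c) are pairwise non-crossing, then new free spaces satisfy f_c' ≥ f_c − δ_c and the spaces Ahead_c(f_c') are pairwise non-crossing. Then the property P ≡ (for all c: 0 ≤ v_c and B_c(v_c) ≤ f_c) and (the spaces Ahead_c(f_c)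 are pairwise non-crossing) is preserved by one full cycle (vehicle step followed by Runtime step). -/
/-!
A vehicle only travels within the free space it has reserved beyond its braking distance,
so `δ' ≤ f - B v' ≤ f`. Shrinking every free space from `f` to `f - δ'` keeps the ahead-spaces
pairwise disjoint because `Ahead` is monotone, which is exactly the Runtime's precondition. The
Runtime then hands out `f' ≥ f - δ' ≥ B v'`, restoring both halves of the invariant.
-/

theorem Pairwise.disjoint_of_monotone_of_le {ι α β : Type*} [Preorder α] [PartialOrder β]
    [OrderBot β] {A : ι → α → β} (hA : ∀ c, Monotone (A c)) {f g : ι → α}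
    (hgf : ∀ c, g c ≤ f c) (h : Pairwise fun c d => Disjoint (A c (f c)) (A d (f d))) :
    Pairwise fun c d => Disjoint (A c (g c)) (A d (g d)) :=
  fun _ _ hcd => (h hcd).mono (hA _ (hgf _)) (hA _ (hgf _))

theorem contracts_inductive_invariant_general
    {ι P : Type*}
    (B : ι → ℝ → ℝ)
    (hBnonneg : ∀ c v, 0 ≤ v → 0 ≤ B c v)
    (Ahead : ι → ℝ → Set P) (hAmono : ∀ c, Monotone (Ahead c))
    (v f δ' v' f' : ι → ℝ)
    -- vehicle contracts
    (hveh : ∀ c, (0 ≤ v c ∧ B c (v c) ≤ f c) →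
      0 ≤ v' c ∧ 0 ≤ δ' c ∧ δ' c + B c (v' c) ≤ f c)
    -- Runtime contract
    (hrt : ((∀ c, 0 ≤ δ' c ∧ δ' c ≤ f c) ∧
        (∀ c d, c ≠ d → Disjoint (Ahead c (f c - δ' c)) (Ahead d (f d - δ' d)))) →
      (∀ c, f c - δ' c ≤ f' c) ∧
        (∀ c d, c ≠ d → Disjoint (Ahead c (f' c)) (Ahead d (f' d))))
    -- invariant at the beginning of the cycle
    (hinv : (∀ c, 0 ≤ v c ∧ B c (v c) ≤ f c) ∧
      (∀ c d, c ≠ d → Disjoint (Ahead c (f c)) (Ahead d (f d)))) :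
    -- invariant at the beginning of the next cycle
    (∀ c, 0 ≤ v' c ∧ B c (v' c) ≤ f' c) ∧
      (∀ c d, c ≠ d → Disjoint (Ahead c (f' c)) (Ahead d (f' d))) := by
  obtain ⟨hsafe, hdisj⟩ := hinv
  have hstep c := hveh c (hsafe c)
  have htravel c : 0 ≤ δ' c ∧ δ' c ≤ f c :=
    ⟨(hstep c).2.1, le_of_add_le_of_nonneg_left (hstep c).2.2 (hBnonneg c _ (hstep c).1)⟩
  have hshrunk : Pairwise fun c d => Disjoint (Ahead c (f c - δ' c)) (Ahead d (f d - δ' d)) :=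
    Pairwise.disjoint_of_monotone_of_le hAmono (fun c => sub_le_self _ (htravel c).1) hdisj
  obtain ⟨hfree, hdisj'⟩ := hrt ⟨htravel, hshrunk⟩
  refine ⟨fun c => ⟨(hstep c).1, ?_⟩, hdisj'⟩
  linarith [(hstep c).2.2, hfree c]

/-- The conjunction of the vehicle and Runtime assume-guarantee contracts is an
inductive invariant preserved by one full cycle (vehicle step then Runtime step). -/
theorem contracts_inductive_invariant
    {ι P : Type*} [Fintype ι]
    (B : ι → ℝ → ℝ) (hBmono : ∀ c, Monotone (B c))
    (hBnonneg : ∀ c v, 0 ≤ v → 0 ≤ B c v)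
    (Ahead : ι → ℝ → Set P) (hAmono : ∀ c, Monotone (Ahead c))
    (v f δ' v' f' : ι → ℝ)
    -- vehicle contracts
    (hveh : ∀ c, (0 ≤ v c ∧ B c (v c) ≤ f c) →
      0 ≤ v' c ∧ 0 ≤ δ' c ∧ δ' c + B c (v' c) ≤ f c)
    -- Runtime contract
    (hrt : ((∀ c, 0 ≤ δ' c ∧ δ' c ≤ f c) ∧
        (∀ c d, c ≠ d → Disjoint (Ahead c (f c - δ' c)) (Ahead d (f d - δ' d)))) →
      (∀ c, f c - δ' c ≤ f' c) ∧
        (∀ c d, c ≠ d → Disjoint (Ahead c (f' c)) (Ahead d (f' d))))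
    -- invariant at the beginning of the cycle
    (hinv : (∀ c, 0 ≤ v c ∧ B c (v c) ≤ f c) ∧
      (∀ c d, c ≠ d → Disjoint (Ahead c (f c)) (Ahead d (f d)))) :
    -- invariant at the beginning of the next cycle
    (∀ c, 0 ≤ v' c ∧ B c (v' c) ≤ f' c) ∧
      (∀ c d, c ≠ d → Disjoint (Ahead c (f' c)) (Ahead d (f' d))) :=
  contracts_inductive_invariant_general B hBnonneg Ahead hAmono v f δ' v' f' hveh hrt hinv
end
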